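/- Let H : ℝ → (Hermitian d×d complex matrices) be continuous in t, and let ψ : ℝ → ℂ^d be differentiable with ‖ψ(t)‖ = 1 for all t and ψ'(t) = −i H(t) ψ(t). Then for every T ≥ 0, the Bures angle between the initial and final states is bounded by the time-integrated energy uncertainty: arccos |⟨ψ(0), ψ(T)⟩| ≤ ∫₀ᵀ Δ_{ψ(t)} H(t) dt, where Δ_ψ H := √(⟨ψ, H²ψ⟩ − ⟨ψ, Hψ⟩²). -/

import Mathlib

open scoped Matrix ComplexOrder

/-- The energy uncertainty (standard deviation) `Δ_ψ H = √(⟨ψ, H²ψ⟩ − ⟨ψ, Hψ⟩²)` of a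
Hermitian matrix `H` in a unit vector `ψ`, where `⟨x, y⟩ = star x ⬝ᵥ y` is the inner
product on `ℂ^d` (conjugate-linear in the first argument). -/
noncomputable def stdDevVec {d : ℕ} (H : Matrix (Fin d) (Fin d) ℂ) (ψ : Fin d → ℂ) : ℝ :=
  Real.sqrt ((star ψ ⬝ᵥ (H * H).mulVec ψ).re - ((star ψ ⬝ᵥ H.mulVec ψ).re) ^ 2)


open Real Set in
lemma mt_comparison (Δ : ℝ → ℝ) (hΔc : Continuous Δ) (hΔ0 : ∀ t, 0 ≤ Δ t)
    (x : ℝ → ℝ) (hxc : Continuous x) (hx1 : ∀ t, |x t| ≤ 1) (hx0 : x 0 = 1)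
    (hder : ∀ t, ∃ x', HasDerivAt x x' t ∧ |x'| ≤ Δ t * Real.sqrt (1 - (x t)^2))
    (T : ℝ) (hT : 0 ≤ T) (hF : (∫ s in (0:ℝ)..T, Δ s) < π/2) :
    Real.cos (∫ s in (0:ℝ)..T, Δ s) ≤ x T := by
  set F : ℝ → ℝ := fun t => ∫ s in (0:ℝ)..t, Δ s with hFdef
  have hFd : ∀ t, HasDerivAt F (Δ t) t := fun t =>
    (hΔc.integral_hasStrictDerivAt 0 t).hasDerivAt
  have hFc : Continuous F := by
    rw [continuous_iff_continuousAt]; exact fun t => (hFd t).continuousAt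
  have hFmono : ∀ a b : ℝ, a ≤ b → F a ≤ F b := by
    intro a b hab
    have h1 : F b - F a = ∫ s in a..b, Δ s :=
      intervalIntegral.integral_interval_sub_left (hΔc.intervalIntegrable 0 b)
        (hΔc.intervalIntegrable 0 a)
    have h2 : 0 ≤ ∫ s in a..b, Δ s :=
      intervalIntegral.integral_nonneg hab (fun u _ => hΔ0 u)
    linarith
  have hF0 : F 0 = 0 := intervalIntegral.integral_same
  by_contra hcon
  push_neg at hcon
  -- hcon : x T < cos (F T)
  set S : Set ℝ := {t | t ∈ Icc 0 T ∧ Real.cos (F t) ≤ x t} with hSdef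
  have hS0 : (0:ℝ) ∈ S := by
    constructor
    · exact ⟨le_refl 0, hT⟩
    · simp only [hF0, Real.cos_zero, hx0, le_refl]
  have hScl : IsClosed S := by
    have : S = Icc 0 T ∩ {t | Real.cos (F t) ≤ x t} := rfl
    rw [this]
    exact isClosed_Icc.inter (isClosed_le (Real.continuous_cos.comp hFc) hxc)
  have hSbdd : BddAbove S := ⟨T, fun t ht => ht.1.2⟩
  set t₀ : ℝ := sSup S with ht₀def
  have ht₀S : t₀ ∈ S := hScl.csSup_mem ⟨0, hS0⟩ hSbdd
  have ht₀0 : 0 ≤ t₀ := ht₀S.1.1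
  have ht₀T : t₀ < T := by
    rcases lt_or_eq_of_le ht₀S.1.2 with h | h
    · exact h
    · exact absurd (h ▸ ht₀S.2) (not_le.mpr hcon)
  have hlt : ∀ t, t₀ < t → t ≤ T → x t < Real.cos (F t) := by
    intro t ht1 ht2
    by_contra hc
    push_neg at hc
    have : t ∈ S := ⟨⟨le_trans ht₀0 ht1.le, ht2⟩, hc⟩
    exact absurd (le_csSup hSbdd this) (not_le.mpr ht1)
  have hFt₀lt : F t₀ < π/2 := lt_of_le_of_lt (hFmono t₀ T ht₀T.le) hF
  have hFt₀0 : 0 ≤ F t₀ := hF0 ▸ hFmono 0 t₀ ht₀0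
  have hcosF : 0 < Real.cos (F t₀) :=
    Real.cos_pos_of_mem_Ioo ⟨by linarith [Real.pi_pos], hFt₀lt⟩
  have hxt₀pos : 0 < x t₀ := lt_of_lt_of_le hcosF ht₀S.2
  -- pick s close to t₀ where x stays positive
  have hopen : {u : ℝ | 0 < x u} ∈ nhds t₀ :=
    (isOpen_lt continuous_const hxc).mem_nhds hxt₀pos
  obtain ⟨δ, hδpos, hδ⟩ := Metric.mem_nhds_iff.mp hopen
  set s : ℝ := min T (t₀ + δ/2) with hsdef
  have ht₀s : t₀ < s := lt_min ht₀T (by linarith)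
  have hsT : s ≤ T := min_le_left _ _
  have hxpos : ∀ u ∈ Icc t₀ s, 0 < x u := by
    intro u hu
    apply hδ
    simp only [Metric.mem_ball, Real.dist_eq]
    have h1 : u - t₀ ≤ δ/2 := by
      have := hu.2
      have : u ≤ t₀ + δ/2 := le_trans this (min_le_right _ _)
      linarith
    have h2 : 0 ≤ u - t₀ := by linarith [hu.1]
    rw [abs_of_nonneg h2]; linarith
  set w : ℝ → ℝ := fun t => Real.arccos (x t) - F t with hwdef
  have hwc : ContinuousOn w (Icc t₀ s) :=
    ((Real.continuous_arccos.comp hxc).sub hFc).continuousOn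
  have hint : interior (Icc t₀ s) = Ioo t₀ s := interior_Icc
  have hwd : ∀ t ∈ Ioo t₀ s, HasDerivAt w
      (-(1 / Real.sqrt (1 - (x t)^2)) * (Classical.choose (hder t)) - Δ t) t ∧
      deriv w t ≤ 0 := by
    intro t ht
    obtain ⟨hx', hb⟩ := Classical.choose_spec (hder t)
    have hxlt1 : x t < 1 := lt_of_lt_of_le (hlt t ht.1 (le_trans ht.2.le hsT))
      (Real.cos_le_one _)
    have hxgt : -1 < x t := lt_trans (by norm_num) (hxpos t ⟨ht.1.le, ht.2.le⟩)
    have hsq : 0 < 1 - (x t)^2 := by nlinarith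
    have hsqrt : 0 < Real.sqrt (1 - (x t)^2) := Real.sqrt_pos.mpr hsq
    have hda : HasDerivAt (fun u => Real.arccos (x u))
        (-(1 / Real.sqrt (1 - (x t)^2)) * (Classical.choose (hder t))) t :=
      (Real.hasDerivAt_arccos (by linarith) (by linarith)).comp t hx'
    have hdw : HasDerivAt w
        (-(1 / Real.sqrt (1 - (x t)^2)) * (Classical.choose (hder t)) - Δ t) t :=
      hda.sub (hFd t)
    refine ⟨hdw, ?_⟩
    rw [hdw.deriv]
    have habs : |Classical.choose (hder t)| ≤ Δ t * Real.sqrt (1 - (x t)^2) := hb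
    have h2 : -(Classical.choose (hder t)) ≤ Δ t * Real.sqrt (1 - (x t)^2) :=
      le_trans (neg_le_abs _) habs
    have h1 : -(1 / Real.sqrt (1 - (x t)^2)) * (Classical.choose (hder t)) ≤ Δ t := by
      have h3 : (-(Classical.choose (hder t))) * (1 / Real.sqrt (1 - (x t)^2)) ≤
          (Δ t * Real.sqrt (1 - (x t)^2)) * (1 / Real.sqrt (1 - (x t)^2)) :=
        mul_le_mul_of_nonneg_right h2 (by positivity)
      have h4 : (Δ t * Real.sqrt (1 - (x t)^2)) * (1 / Real.sqrt (1 - (x t)^2)) = Δ t := by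
        field_simp
      calc -(1 / Real.sqrt (1 - (x t)^2)) * (Classical.choose (hder t))
          = (-(Classical.choose (hder t))) * (1 / Real.sqrt (1 - (x t)^2)) := by ring
        _ ≤ _ := h3
        _ = Δ t := h4
    linarith
  have hanti : AntitoneOn w (Icc t₀ s) := by
    apply antitoneOn_of_deriv_nonpos (convex_Icc t₀ s) hwc
    · intro t ht
      rw [hint] at ht
      exact ((hwd t ht).1.differentiableAt).differentiableWithinAt
    · intro t ht
      rw [hint] at ht
      exact (hwd t ht).2
  have hws : w s ≤ w t₀ :=
    hanti ⟨le_refl t₀, ht₀s.le⟩ ⟨ht₀s.le, le_refl s⟩ ht₀s.le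
  have hwt₀ : w t₀ ≤ 0 := by
    have h1 : Real.arccos (x t₀) ≤ Real.arccos (Real.cos (F t₀)) := by
      unfold Real.arccos
      exact sub_le_sub_left (Real.monotone_arcsin ht₀S.2) _
    have h2 : Real.arccos (Real.cos (F t₀)) = F t₀ :=
      Real.arccos_cos hFt₀0 (by linarith [Real.pi_pos])
    simp only [hwdef]; linarith
  have hwspos : 0 < w s := by
    have hxs : x s < Real.cos (F s) := hlt s ht₀s hsT
    have hFs0 : 0 ≤ F s := hF0 ▸ hFmono 0 s (le_trans ht₀0 ht₀s.le)
    have hFsπ : F s ≤ π := by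
      have := lt_of_le_of_lt (hFmono s T hsT) hF
      linarith [Real.pi_pos]
    have h2 : Real.arccos (Real.cos (F s)) = F s := Real.arccos_cos hFs0 hFsπ
    have h1 : Real.arccos (Real.cos (F s)) < Real.arccos (x s) := by
      apply Real.strictAntiOn_arccos _ _ hxs
      · exact ⟨neg_le_of_abs_le (hx1 s), le_of_abs_le (hx1 s)⟩
      · exact ⟨Real.neg_one_le_cos _, Real.cos_le_one _⟩
    simp only [hwdef]; linarith
  linarith

section innerlemmas
variable {d : ℕ}

local notation "⟪" x ", " y "⟫" => @inner ℂ (EuclideanSpace ℂ (Fin d)) _ x y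

private noncomputable def toE (x : Fin d → ℂ) : EuclideanSpace ℂ (Fin d) :=
  (WithLp.equiv 2 (Fin d → ℂ)).symm x

private lemma inner_toE (x y : Fin d → ℂ) : ⟪toE x, toE y⟫ = star x ⬝ᵥ y :=
  (EuclideanSpace.inner_toLp_toLp x y).trans (dotProduct_comm _ _)

private lemma norm_toE_one {x : Fin d → ℂ} (hx : star x ⬝ᵥ x = 1) : ‖toE x‖ = 1 := by
  have h := inner_self_eq_norm_sq (𝕜 := ℂ) (toE x)
  rw [inner_toE, hx] at h
  simp only [RCLike.one_re] at h
  nlinarith [norm_nonneg (toE x)]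

lemma mt_abs_le_one {u a : Fin d → ℂ} (hu : star u ⬝ᵥ u = 1) (ha : star a ⬝ᵥ a = 1) :
    ‖star a ⬝ᵥ u‖ ≤ 1 := by
  have h := norm_inner_le_norm (𝕜 := ℂ) (toE a) (toE u)
  rw [inner_toE, norm_toE_one hu, norm_toE_one ha, one_mul] at h
  simpa using h

lemma mt_cs_bound (Hm : Matrix (Fin d) (Fin d) ℂ) (hH : Hm.IsHermitian)
    (u a : Fin d → ℂ) (hu : star u ⬝ᵥ u = 1) (ha : star a ⬝ᵥ a = 1) :
    ‖star a ⬝ᵥ (Hm.mulVec u - (((star u ⬝ᵥ Hm.mulVec u).re : ℝ) : ℂ) • u)‖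
      ≤ Real.sqrt (1 - (‖star a ⬝ᵥ u‖)^2) * stdDevVec Hm u := by
  set Er : ℝ := (star u ⬝ᵥ Hm.mulVec u).re with hErdef
  -- transfer of ⟨x, H y⟩ = ⟨H x, y⟩ style identity
  have hswap : ∀ z : Fin d → ℂ, star (Hm.mulVec u) ⬝ᵥ z = star u ⬝ᵥ Hm.mulVec z := by
    intro z
    rw [Matrix.star_mulVec, ← Matrix.dotProduct_mulVec, hH.eq]
  have hreal : star u ⬝ᵥ Hm.mulVec u = (Er : ℂ) := by
    have hconj : (starRingEnd ℂ) (star u ⬝ᵥ Hm.mulVec u) = star u ⬝ᵥ Hm.mulVec u := by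
      have e1 : star u ⬝ᵥ Hm.mulVec u = ⟪toE u, toE (Hm.mulVec u)⟫ := (inner_toE _ _).symm
      calc (starRingEnd ℂ) (star u ⬝ᵥ Hm.mulVec u)
          = (starRingEnd ℂ) ⟪toE u, toE (Hm.mulVec u)⟫ := by rw [e1]
        _ = ⟪toE (Hm.mulVec u), toE u⟫ := inner_conj_symm _ _
        _ = star (Hm.mulVec u) ⬝ᵥ u := inner_toE _ _
        _ = star u ⬝ᵥ Hm.mulVec u := hswap u
    exact (Complex.conj_eq_iff_re.mp hconj).symm
  set U : EuclideanSpace ℂ (Fin d) := toE u with hUdef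
  set A : EuclideanSpace ℂ (Fin d) := toE a with hAdef
  set V : EuclideanSpace ℂ (Fin d) := toE (Hm.mulVec u) with hVdef
  have hUU : ⟪U, U⟫ = 1 := by rw [hUdef, inner_toE, hu]
  have hnU : ‖U‖ = 1 := norm_toE_one hu
  have hnA : ‖A‖ = 1 := norm_toE_one ha
  have hUV : ⟪U, V⟫ = (Er : ℂ) := by rw [hUdef, hVdef, inner_toE, hreal]
  have hVU : ⟪V, U⟫ = (Er : ℂ) := by
    rw [← inner_conj_symm, hUV]; simp
  have hVV : RCLike.re ⟪V, V⟫ = (star u ⬝ᵥ (Hm * Hm).mulVec u).re := by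
    rw [hVdef, inner_toE, hswap, Matrix.mulVec_mulVec]
    rfl
  set v : EuclideanSpace ℂ (Fin d) := V - (Er : ℂ) • U with hvdef
  have hUv : ⟪U, v⟫ = 0 := by
    rw [hvdef, inner_sub_right, inner_smul_right, hUV, hUU]
    ring
  have hnv2 : ‖v‖^2 = (star u ⬝ᵥ (Hm * Hm).mulVec u).re - Er^2 := by
    have h := norm_sub_sq (𝕜 := ℂ) V ((Er : ℂ) • U)
    rw [inner_smul_right, hVU] at h
    have h2 : ‖(Er : ℂ) • U‖ = |Er| := by
      rw [norm_smul, hnU, mul_one, Complex.norm_real, Real.norm_eq_abs]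
    have h3 : ‖V‖^2 = (star u ⬝ᵥ (Hm * Hm).mulVec u).re := by
      rw [← hVV]; exact (inner_self_eq_norm_sq (𝕜 := ℂ) V).symm
    rw [h2, h3] at h
    have h4 : RCLike.re ((Er : ℂ) * (Er : ℂ)) = Er^2 := by
      simp [← Complex.ofReal_mul]; ring
    rw [h4] at h
    rw [hvdef, h]
    rw [sq_abs]
    ring
  have hstd : stdDevVec Hm u = ‖v‖ := by
    rw [stdDevVec, ← hErdef, hnv2.symm, Real.sqrt_sq (norm_nonneg v)]
  set w : EuclideanSpace ℂ (Fin d) := A - ⟪U, A⟫ • U with hwdef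
  have hAv : ⟪A, v⟫ = ⟪w, v⟫ := by
    have hA : A = w + ⟪U, A⟫ • U := by rw [hwdef]; abel
    rw [hA, inner_add_left, inner_smul_left, hUv]
    ring
  have habsUA : ‖⟪U, A⟫‖ = ‖star a ⬝ᵥ u‖ := by
    have h1 : ⟪U, A⟫ = (starRingEnd ℂ) ⟪A, U⟫ := (inner_conj_symm U A).symm
    rw [h1, hAdef, hUdef, inner_toE]
    simp
  have hnw2 : ‖w‖^2 = 1 - (‖star a ⬝ᵥ u‖)^2 := by
    have h := norm_sub_sq (𝕜 := ℂ) A (⟪U, A⟫ • U)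
    rw [inner_smul_right] at h
    have hAU : ⟪A, U⟫ = (starRingEnd ℂ) ⟪U, A⟫ := (inner_conj_symm A U).symm
    rw [hAU] at h
    have h2 : RCLike.re (⟪U, A⟫ * (starRingEnd ℂ) ⟪U, A⟫) = ‖⟪U, A⟫‖^2 := by
      rw [Complex.mul_conj]
      simp [Complex.normSq_eq_norm_sq, RCLike.re_to_complex, ← Complex.ofReal_pow]
    have h3 : ‖⟪U, A⟫ • U‖ = ‖⟪U, A⟫‖ := by rw [norm_smul, hnU, mul_one]
    rw [h2, h3, hnA, habsUA] at h
    rw [hwdef, h]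
    ring
  have hnw : ‖w‖ = Real.sqrt (1 - (‖star a ⬝ᵥ u‖)^2) := by
    rw [← hnw2, Real.sqrt_sq (norm_nonneg w)]
  have hkey : star a ⬝ᵥ (Hm.mulVec u - ((Er : ℝ) : ℂ) • u) = ⟪A, v⟫ := by
    rw [hAdef, hvdef, hVdef, hUdef, ← inner_toE]
    rfl
  rw [hkey, hAv]
  calc ‖⟪w, v⟫‖ = ‖⟪w, v⟫‖ := rfl
    _ ≤ ‖w‖ * ‖v‖ := norm_inner_le_norm w v
    _ = Real.sqrt (1 - (‖star a ⬝ᵥ u‖)^2) * stdDevVec Hm u := by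
        rw [hnw, hstd]

end innerlemmas

lemma arccos_antitone' {a b : ℝ} (h : a ≤ b) : Real.arccos b ≤ Real.arccos a := by
  unfold Real.arccos
  exact sub_le_sub_left (Real.monotone_arcsin h) _

/-- **Mandelstam–Tamm quantum speed limit for time-dependent Hamiltonians.**
If `H(t)` is a continuous family of Hermitian matrices and `ψ(t)` is a differentiable family
of unit vectors solving the Schrödinger equation `ψ'(t) = −i H(t) ψ(t)`, then for every
`T ≥ 0` the Bures angle between initial and final states is bounded by the time-integrated
energy uncertainty: `arccos |⟨ψ(0), ψ(T)⟩| ≤ ∫₀ᵀ Δ_{ψ(t)} H(t) dt`. -/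
theorem mandelstam_tamm_time_dependent {d : ℕ}
    (H : ℝ → Matrix (Fin d) (Fin d) ℂ)
    (hherm : ∀ t, (H t).IsHermitian)
    (hcont : Continuous H)
    (ψ : ℝ → (Fin d → ℂ))
    (hnorm : ∀ t, star (ψ t) ⬝ᵥ ψ t = 1)
    (hschro : ∀ t, HasDerivAt ψ (-Complex.I • (H t).mulVec (ψ t)) t)
    (T : ℝ) (hT : 0 ≤ T) :
    Real.arccos (‖star (ψ 0) ⬝ᵥ ψ T‖) ≤
      ∫ t in (0:ℝ)..T, stdDevVec (H t) (ψ t) := by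
  have hψc : Continuous ψ := continuous_iff_continuousAt.mpr fun t => (hschro t).continuousAt
  -- continuity helpers
  have hdotc : ∀ (f g : ℝ → (Fin d → ℂ)), Continuous f → Continuous g →
      Continuous (fun t => star (f t) ⬝ᵥ g t) := by
    intro f g hf hg
    simp only [dotProduct, Pi.star_apply]
    apply continuous_finset_sum
    intro i _
    exact (continuous_star.comp ((continuous_apply i).comp hf)).mul
      ((continuous_apply i).comp hg)
  have hmvc : ∀ (M : ℝ → Matrix (Fin d) (Fin d) ℂ) (g : ℝ → Fin d → ℂ),
      Continuous M → Continuous g → Continuous (fun t => (M t).mulVec (g t)) := by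
    intro M g hM hg
    apply continuous_pi
    intro i
    simp only [Matrix.mulVec, dotProduct]
    apply continuous_finset_sum
    intro j _
    exact ((continuous_apply j).comp ((continuous_apply i).comp hM)).mul
      ((continuous_apply j).comp hg)
  -- the uncertainty function
  set Δf : ℝ → ℝ := fun t => stdDevVec (H t) (ψ t) with hΔfdef
  have hΔf0 : ∀ t, 0 ≤ Δf t := fun t => Real.sqrt_nonneg _
  have hΔfc : Continuous Δf := by
    have heq : Δf = fun t => Real.sqrt ((star (ψ t) ⬝ᵥ (H t).mulVec ((H t).mulVec (ψ t))).re
        - ((star (ψ t) ⬝ᵥ (H t).mulVec (ψ t)).re) ^ 2) := by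
      funext t
      rw [hΔfdef]
      simp only [stdDevVec, Matrix.mulVec_mulVec]
    rw [heq]
    apply Continuous.sqrt
    exact (Complex.continuous_re.comp (hdotc _ _ hψc (hmvc _ _ hcont (hmvc _ _ hcont hψc)))).sub
      ((Complex.continuous_re.comp (hdotc _ _ hψc (hmvc _ _ hcont hψc))).pow 2)
  -- overlap function and its derivative
  set c : ℝ → ℂ := fun t => star (ψ 0) ⬝ᵥ ψ t with hcdef
  have hψi : ∀ (i : Fin d) (t : ℝ), HasDerivAt (fun s => ψ s i)
      ((-Complex.I • (H t).mulVec (ψ t)) i) t := by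
    intro i t
    have h := (ContinuousLinearMap.proj (R := ℝ) (φ := fun _ : Fin d => ℂ)
      i).hasFDerivAt.comp_hasDerivAt t (hschro t)
    exact (hasDerivAt_pi.mp (hschro t)) i
  have hcd : ∀ t, HasDerivAt c (star (ψ 0) ⬝ᵥ (-Complex.I • (H t).mulVec (ψ t))) t := by
    intro t
    have h := HasDerivAt.fun_sum (u := Finset.univ)
      (fun i _ => ((hψi i t).const_mul (star (ψ 0) i)))
    rw [hcdef]
    simpa [dotProduct, Finset.mul_sum] using h
  -- mean energy and its primitive
  set E : ℝ → ℝ := fun t => (star (ψ t) ⬝ᵥ (H t).mulVec (ψ t)).re with hEdef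
  have hEc : Continuous E := Complex.continuous_re.comp (hdotc _ _ hψc (hmvc _ _ hcont hψc))
  set G : ℝ → ℝ := fun t => ∫ s in (0:ℝ)..t, E s with hGdef
  have hGd : ∀ t, HasDerivAt G (E t) t := fun t => (hEc.integral_hasStrictDerivAt 0 t).hasDerivAt
  -- phase-corrected overlap
  set φ : ℝ → ℂ := fun t => Complex.exp (Complex.I * (G t : ℂ)) * c t with hφdef
  set Φ' : ℝ → ℂ := fun t => Complex.exp (Complex.I * (G t : ℂ)) *
    (Complex.I * (E t : ℂ) * c t + star (ψ 0) ⬝ᵥ (-Complex.I • (H t).mulVec (ψ t))) with hΦ'def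
  have hφd : ∀ t, HasDerivAt φ (Φ' t) t := by
    intro t
    have h1 : HasDerivAt (fun s => ((G s : ℝ) : ℂ)) ((E t : ℂ)) t := (hGd t).ofReal_comp
    have h2 : HasDerivAt (fun s => Complex.I * (G s : ℂ)) (Complex.I * (E t : ℂ)) t :=
      h1.const_mul Complex.I
    have h3 := h2.cexp
    have h4 := h3.mul (hcd t)
    refine h4.congr_deriv ?_
    rw [hΦ'def]
    ring
  -- real part
  set x : ℝ → ℝ := fun t => (φ t).re with hxdef
  have hxd : ∀ t, HasDerivAt x ((Φ' t).re) t := by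
    intro t
    have := Complex.reCLM.hasFDerivAt.comp_hasDerivAt t (hφd t)
    exact this
  have hxc : Continuous x := continuous_iff_continuousAt.mpr fun t => (hxd t).continuousAt
  have habsφ : ∀ t, ‖φ t‖ = ‖c t‖ := by
    intro t
    rw [hφdef]
    simp [map_mul, Complex.norm_exp]
  have habsc1 : ∀ t, ‖c t‖ ≤ 1 := fun t => mt_abs_le_one (hnorm t) (hnorm 0)
  have hx1 : ∀ t, |x t| ≤ 1 := fun t =>
    le_trans (Complex.abs_re_le_norm _) (le_of_eq_of_le (habsφ t) (habsc1 t))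
  have hx0 : x 0 = 1 := by
    rw [hxdef, hφdef, hGdef]
    simp only [intervalIntegral.integral_same, Complex.ofReal_zero, mul_zero, Complex.exp_zero,
      one_mul, hcdef, hnorm 0]
    rfl
  -- derivative bound
  have hder : ∀ t, ∃ x', HasDerivAt x x' t ∧ |x'| ≤ Δf t * Real.sqrt (1 - (x t)^2) := by
    intro t
    refine ⟨(Φ' t).re, hxd t, ?_⟩
    have hkey : Complex.I * (E t : ℂ) * c t + star (ψ 0) ⬝ᵥ (-Complex.I • (H t).mulVec (ψ t))
        = -Complex.I * (star (ψ 0) ⬝ᵥ ((H t).mulVec (ψ t) - ((E t : ℝ) : ℂ) • ψ t)) := by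
      rw [dotProduct_sub, dotProduct_smul, dotProduct_smul]
      simp only [smul_eq_mul, hcdef]
      ring
    have habsΦ' : ‖Φ' t‖ =
        ‖star (ψ 0) ⬝ᵥ ((H t).mulVec (ψ t) - ((E t : ℝ) : ℂ) • ψ t)‖ := by
      simp only [hΦ'def]
      rw [hkey]
      simp [map_mul, Complex.norm_exp]
    have hcs := mt_cs_bound (H t) (hherm t) (ψ t) (ψ 0) (hnorm t) (hnorm 0)
    have h2 : ‖Φ' t‖ ≤
        Real.sqrt (1 - (‖c t‖)^2) * Δf t := by
      rw [habsΦ']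
      exact hcs
    have h3 : Real.sqrt (1 - (‖c t‖)^2) ≤ Real.sqrt (1 - (x t)^2) := by
      apply Real.sqrt_le_sqrt
      have : (x t)^2 ≤ (‖c t‖)^2 := by
        rw [← habsφ t]
        calc (x t)^2 = |x t|^2 := (sq_abs _).symm
          _ ≤ (‖φ t‖)^2 := by
              have := Complex.abs_re_le_norm (φ t)
              nlinarith [abs_nonneg (x t)]
      linarith
    calc |(Φ' t).re| ≤ ‖Φ' t‖ := Complex.abs_re_le_norm _
      _ ≤ Real.sqrt (1 - (‖c t‖)^2) * Δf t := h2
      _ ≤ Real.sqrt (1 - (x t)^2) * Δf t := by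
          exact mul_le_mul_of_nonneg_right h3 (hΔf0 t)
      _ = Δf t * Real.sqrt (1 - (x t)^2) := mul_comm _ _
  -- conclude
  set It : ℝ := ∫ t in (0:ℝ)..T, Δf t with hItdef
  have hIt0 : 0 ≤ It := intervalIntegral.integral_nonneg hT (fun u _ => hΔf0 u)
  rcases le_or_gt (Real.pi/2) It with h | h
  · calc Real.arccos (‖c T‖) ≤ Real.pi/2 :=
        Real.arccos_le_pi_div_two.mpr (norm_nonneg _)
      _ ≤ It := h
  · have hcomp := mt_comparison Δf hΔfc hΔf0 x hxc hx1 hx0 hder T hT h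
    have hxT : x T ≤ ‖c T‖ := by
      calc x T ≤ ‖φ T‖ := Complex.re_le_norm _
        _ = ‖c T‖ := habsφ T
    have h1 : Real.cos It ≤ ‖c T‖ := le_trans hcomp hxT
    calc Real.arccos (‖c T‖) ≤ Real.arccos (Real.cos It) := arccos_antitone' h1
      _ = It := Real.arccos_cos hIt0 (by linarith [Real.pi_pos])
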